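/- The minimum of the rate function I on an open subset of 𝓜 is either zero, infinity, or is not achieved; equivalently, for every open set G ⊆ 𝓜 and every μ ∈ G with 0 < I(μ) < ∞, there exists ν ∈ G with I(ν) < I(μ). -/

import Mathlib

open MeasureTheory ProbabilityTheory Filter Topology Set
open scoped ENNReal NNReal Classical

noncomputable section

/-! ### Graph occupation measures and the space `𝓜` -/

/-- The graph occupation measure of a function `φ` (viewed on `[0,∞)`):
`m(φ)(A) = Leb {s ≥ 0 : (s, φ s) ∈ A}`. -/
def graphOccupation (φ : ℝ → ℝ) : Measure (ℝ × ℝ) :=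
  Measure.map (fun s => (s, φ s)) (volume.restrict (Ici (0 : ℝ)))

/-- The (topological) support of a measure on `ℝ × ℝ`: the points all of whose open
neighborhoods have positive measure. -/
def measSupport (μ : Measure (ℝ × ℝ)) : Set (ℝ × ℝ) :=
  {p | ∀ U : Set (ℝ × ℝ), IsOpen U → p ∈ U → 0 < μ U}

/-- The class `𝓜`: measures on `[0,∞) × ℝ` whose first marginal is Lebesgue measure on
`[0,∞)` and whose support is contained in the union of the closures of the graph of a
nonnegative nondecreasing `f` and of the graph of `-g`, `g` nonnegative nondecreasing. -/
def McalSet : Set (Measure (ℝ × ℝ)) :=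
  {μ | μ.map Prod.fst = volume.restrict (Ici (0 : ℝ)) ∧
    ∃ f g : ℝ → ℝ, MonotoneOn f (Ici 0) ∧ MonotoneOn g (Ici 0) ∧
      (∀ t ∈ Ici (0 : ℝ), 0 ≤ f t) ∧ (∀ t ∈ Ici (0 : ℝ), 0 ≤ g t) ∧
      measSupport μ ⊆
        closure {p : ℝ × ℝ | 0 ≤ p.1 ∧ p.2 = f p.1} ∪
        closure {p : ℝ × ℝ | 0 ≤ p.1 ∧ p.2 = -g p.1}}

/-- The topology of local weak convergence on measures on `ℝ × ℝ`, generated by the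
evaluation maps `μ ↦ ∫ f dμ` against continuous compactly supported functions. -/
instance measureWeakTopology : TopologicalSpace (Measure (ℝ × ℝ)) :=
  TopologicalSpace.generateFrom
    {S | ∃ f : ℝ × ℝ → ℝ, Continuous f ∧ HasCompactSupport f ∧
      ∃ O : Set ℝ, IsOpen O ∧ S = {μ : Measure (ℝ × ℝ) | (∫ p, f p ∂μ) ∈ O}}

/-- The topology `𝓣_L` of weak convergence on compact subsets of `[0, L] × ℝ`. -/
def topologyUpTo (L : ℝ) : TopologicalSpace (Measure (ℝ × ℝ)) :=
  TopologicalSpace.generateFrom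
    {S | ∃ f : ℝ × ℝ → ℝ, Continuous f ∧ HasCompactSupport f ∧
      tsupport f ⊆ Icc (0 : ℝ) L ×ˢ (univ : Set ℝ) ∧
      ∃ O : Set ℝ, IsOpen O ∧ S = {μ : Measure (ℝ × ℝ) | (∫ p, f p ∂μ) ∈ O}}

/-- `f_μ`: the minimal left-continuous nondecreasing function whose graph closure covers the
part of the support of `μ` in the open upper half plane. -/
def fOf (μ : Measure (ℝ × ℝ)) (t : ℝ) : ℝ :=
  sSup ({0} ∪ {y : ℝ | 0 < y ∧ ∃ s, 0 ≤ s ∧ s < t ∧ (s, y) ∈ measSupport μ})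

/-- `g_μ`: the minimal left-continuous nondecreasing function whose graph closure covers
(the negative of) the part of the support of `μ` in the open lower half plane. -/
def gOf (μ : Measure (ℝ × ℝ)) (t : ℝ) : ℝ :=
  sSup ({0} ∪ {y : ℝ | 0 < y ∧ ∃ s, 0 ≤ s ∧ s < t ∧ (s, -y) ∈ measSupport μ})

/-- `s_{μ+}`: the supremum of the support of the projection to the time axis of the
restriction of `μ` to the open upper half plane. -/
def sPlus (μ : Measure (ℝ × ℝ)) : ℝ≥0∞ :=
  sSup {x : ℝ≥0∞ | ∃ s : ℝ, x = ENNReal.ofReal s ∧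
    ∀ ε : ℝ, 0 < ε → 0 < μ (Ioo (s - ε) (s + ε) ×ˢ Ioi (0 : ℝ))}

/-- `s_{μ-}`: the supremum of the support of the projection to the time axis of the
restriction of `μ` to the open lower half plane. -/
def sMinus (μ : Measure (ℝ × ℝ)) : ℝ≥0∞ :=
  sSup {x : ℝ≥0∞ | ∃ s : ℝ, x = ENNReal.ofReal s ∧
    ∀ ε : ℝ, 0 < ε → 0 < μ (Ioo (s - ε) (s + ε) ×ˢ Iio (0 : ℝ))}

/-- The Lebesgue–Stieltjes measure of a monotone function (junk value `0` otherwise). -/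
def stieltjesMeasureOf (f : ℝ → ℝ) : Measure ℝ :=
  if hf : Monotone f then hf.stieltjesFunction.measure else 0

/-- The rate function `I` on measures: if `s_{μ-} = ∞` then
`I(μ) = (π²/2)∫_{(0,s_{μ+}]} t⁻² d(f_μ+g_μ) + (π²/8)∫_{(s_{μ+},∞)} t⁻² dg_μ`,
and if `s_{μ-} < ∞` the same formula with `f_μ, g_μ` exchanged and `s_{μ+}` replaced by
`s_{μ-}`. -/
def Irate (μ : Measure (ℝ × ℝ)) : ℝ≥0∞ :=
  if sMinus μ = ∞ then
    ENNReal.ofReal (Real.pi ^ 2 / 2) *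
      (∫⁻ t in {t : ℝ | 0 < t ∧ ENNReal.ofReal t ≤ sPlus μ}, ENNReal.ofReal ((t ^ 2)⁻¹)
        ∂(stieltjesMeasureOf (fOf μ) + stieltjesMeasureOf (gOf μ))) +
    ENNReal.ofReal (Real.pi ^ 2 / 8) *
      (∫⁻ t in {t : ℝ | 0 < t ∧ sPlus μ < ENNReal.ofReal t}, ENNReal.ofReal ((t ^ 2)⁻¹)
        ∂(stieltjesMeasureOf (gOf μ)))
  else
    ENNReal.ofReal (Real.pi ^ 2 / 2) *
      (∫⁻ t in {t : ℝ | 0 < t ∧ ENNReal.ofReal t ≤ sMinus μ}, ENNReal.ofReal ((t ^ 2)⁻¹)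
        ∂(stieltjesMeasureOf (fOf μ) + stieltjesMeasureOf (gOf μ))) +
    ENNReal.ofReal (Real.pi ^ 2 / 8) *
      (∫⁻ t in {t : ℝ | 0 < t ∧ sMinus μ < ENNReal.ofReal t}, ENNReal.ofReal ((t ^ 2)⁻¹)
        ∂(stieltjesMeasureOf (fOf μ)))

/-- The set `𝓚 = {μ ∈ 𝓜 : I(μ) ≤ 1}`. -/
def Kcal : Set (Measure (ℝ × ℝ)) := {μ | μ ∈ McalSet ∧ Irate μ ≤ 1}

/-- A subset of `𝓜` which is open in the subspace topology of `𝓜`. -/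
def IsOpenInM (G : Set (Measure (ℝ × ℝ))) : Prop :=
  ∃ V : Set (Measure (ℝ × ℝ)), IsOpen V ∧ G = V ∩ McalSet

/-- The interior, relative to `𝓜`, of a subset of `𝓜`. -/
def relInteriorM (Bs : Set (Measure (ℝ × ℝ))) : Set (Measure (ℝ × ℝ)) :=
  {μ | μ ∈ McalSet ∧ ∃ V, IsOpen V ∧ μ ∈ V ∧ V ∩ McalSet ⊆ Bs}

/-- The closure, relative to `𝓜`, of a subset of `𝓜`. -/
def relClosureM (Bs : Set (Measure (ℝ × ℝ))) : Set (Measure (ℝ × ℝ)) :=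
  {μ | μ ∈ McalSet ∧ ∀ V, IsOpen V → μ ∈ V → (V ∩ Bs).Nonempty}

/-! ### Step data `(h, x) ∈ 𝓢` -/

/-- The set `𝓢` of pairs of finite sequences `h = (h₁ < ⋯ < h_N)`, positive, and
`x = (x₁, …, x_N)` of nonzero reals such that `|x_i| ≤ |x_j|` whenever `i < j` and
`x_i, x_j` have the same sign. -/
structure StepData where
  /-- the length `N ≥ 1` -/
  N : ℕ
  Npos : 0 < N
  /-- the depths `h₁ < ⋯ < h_N` -/
  h : Fin N → ℝ
  /-- the positions `x₁, …, x_N` -/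
  x : Fin N → ℝ
  h_pos : ∀ i, 0 < h i
  h_mono : StrictMono h
  x_ne : ∀ i, x i ≠ 0
  x_sign : ∀ i j : Fin N, i < j → 0 < x i * x j → |x i| ≤ |x j|

/-- `i ∈ 𝓘_∞`: all of `x_i, x_{i+1}, …, x_N` have the same sign. -/
def StepData.inIinf (d : StepData) (i : Fin d.N) : Prop :=
  ∀ j : Fin d.N, i ≤ j → 0 < d.x i * d.x j

/-- `x_{i⁻}`: the value of `x` at the largest index `j < i` with `x_j` of the same sign
as `x_i`, and `0` if there is no such index. -/
def StepData.xMinus (d : StepData) (i : Fin d.N) : ℝ :=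
  if hs : (Finset.univ.filter (fun j : Fin d.N => j < i ∧ 0 < d.x j * d.x i)).Nonempty then
    d.x ((Finset.univ.filter (fun j : Fin d.N => j < i ∧ 0 < d.x j * d.x i)).max' hs)
  else 0

/-- The rate `I(h,x) = (π²/2) ∑_{i ∉ 𝓘_∞} |x_i - x_{i⁻}|/h_i² +
(π²/8) ∑_{i ∈ 𝓘_∞} |x_i - x_{i⁻}|/h_i²`. -/
def StepData.rate (d : StepData) : ℝ :=
  ∑ i : Fin d.N,
    (if d.inIinf i then Real.pi ^ 2 / 8 else Real.pi ^ 2 / 2) *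
      (|d.x i - d.xMinus i| / (d.h i) ^ 2)

/-- The step function `Φ_{h,x}`: `0` on `[0, h₁]`, `x_i` on `(h_i, h_{i+1}]`,
and `x_N` on `(h_N, ∞)`. -/
def StepData.stepFun (d : StepData) : ℝ → ℝ := fun t =>
  if hs : (Finset.univ.filter (fun i : Fin d.N => d.h i < t)).Nonempty then
    d.x ((Finset.univ.filter (fun i : Fin d.N => d.h i < t)).max' hs)
  else 0

/-- `μ_{h,x} = m(Φ_{h,x})`. -/
def StepData.occ (d : StepData) : Measure (ℝ × ℝ) := graphOccupation d.stepFun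

/-- `h_N`, the last depth. -/
def StepData.hN (d : StepData) : ℝ := d.h ⟨d.N - 1, Nat.sub_lt d.Npos Nat.one_pos⟩

/-- The open set `𝓤(h,x,ε)` of measures `ν ∈ 𝓜` charging
`(h_i - ε, h_i + ε) × (x_i, ∞)` for `x_i > 0` and `(h_i - ε, h_i + ε) × (-∞, x_i)`
for `x_i < 0`. -/
def StepData.Uset (d : StepData) (ε : ℝ) : Set (Measure (ℝ × ℝ)) :=
  {ν | ν ∈ McalSet ∧ ∀ i : Fin d.N,
    (0 < d.x i → 0 < ν (Ioo (d.h i - ε) (d.h i + ε) ×ˢ Ioi (d.x i))) ∧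
    (d.x i < 0 → 0 < ν (Ioo (d.h i - ε) (d.h i + ε) ×ˢ Iio (d.x i)))}

/-! ### The process of wells -/

/-- `[a,c]` is an interval witnessing the well property for the local minimum `x₀` of `f`:
`f x₀` is the minimum of `f` on `[a,c]` and `f a`, `f c` are the maximum values of `f`
on `[a, x₀]` and `[x₀, c]` respectively. -/
def IsWellOf (f : ℝ → ℝ) (x₀ a c : ℝ) : Prop :=
  a ≤ x₀ ∧ x₀ ≤ c ∧ IsMinOn f (Icc a c) x₀ ∧
    IsMaxOn f (Icc a x₀) a ∧ IsMaxOn f (Icc x₀ c) c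

/-- The left endpoint of the (maximal) well of `x₀`. -/
def wellLeft (f : ℝ → ℝ) (x₀ : ℝ) : ℝ := sInf {a | ∃ c, IsWellOf f x₀ a c}

/-- The right endpoint of the (maximal) well of `x₀`. -/
def wellRight (f : ℝ → ℝ) (x₀ : ℝ) : ℝ := sSup {c | ∃ a, IsWellOf f x₀ a c}

/-- The depth of the well of `x₀`. -/
def wellDepth (f : ℝ → ℝ) (x₀ : ℝ) : ℝ :=
  min (f (wellLeft f x₀) - f x₀) (f (wellRight f x₀) - f x₀)

/-- The bottoms of wells of depth at least `h` whose domain contains `0`. -/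
def wellCandidates (f : ℝ → ℝ) (h : ℝ) : Set ℝ :=
  {x₀ | (∃ a c, IsWellOf f x₀ a c) ∧ h ≤ wellDepth f x₀ ∧
    (0 : ℝ) ∈ Icc (wellLeft f x₀) (wellRight f x₀)}

/-- The process of wells `x_f`: for `h > 0`, the smallest point at which `f` attains its
minimum on the domain of the minimal well of depth at least `h` containing `0` (with value
`0` if there is no such well), and `x_f (h) = 0` for `h ≤ 0`. -/
def wellProcess (f : ℝ → ℝ) (h : ℝ) : ℝ :=
  if h ≤ 0 then 0
  else if H : ∃ x₀ ∈ wellCandidates f h, ∀ y ∈ wellCandidates f h,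
      Icc (wellLeft f x₀) (wellRight f x₀) ⊆ Icc (wellLeft f y) (wellRight f y) then
    sInf {z | z ∈ Icc (wellLeft f H.choose) (wellRight f H.choose) ∧
      IsMinOn f (Icc (wellLeft f H.choose) (wellRight f H.choose)) z}
  else 0

/-! ### Brownian motion -/

/-- `B` is a standard two-sided Brownian motion on the probability space `(Ω, P)`:
continuous paths, `B 0 = 0`, and for `s ≤ t` the increment `B t - B s` is a centered
Gaussian of variance `t - s`, with independent increments over disjoint intervals. -/
structure IsTwoSidedBM {Ω : Type*} [MeasurableSpace Ω] (P : Measure Ω)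
    (B : Ω → ℝ → ℝ) : Prop where
  isProb : IsProbabilityMeasure P
  cont : ∀ ω, Continuous (B ω)
  zero : ∀ ω, B ω 0 = 0
  meas : ∀ t : ℝ, Measurable fun ω => B ω t
  gauss_incr : ∀ s t : ℝ, s ≤ t →
    Measure.map (fun ω => B ω t - B ω s) P = gaussianReal 0 (Real.toNNReal (t - s))
  indep_incr : ∀ (n : ℕ) (t : Fin (n + 1) → ℝ), Monotone t →
    iIndepFun
      (fun i : Fin n => fun ω => B ω (t i.succ) - B ω (t i.castSucc)) P

/-- `B` is a standard one-sided Brownian motion (time set `[0,∞)`) started at `0`. -/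
structure IsBrownianMotion {Ω : Type*} [MeasurableSpace Ω] (P : Measure Ω)
    (B : Ω → ℝ → ℝ) : Prop where
  isProb : IsProbabilityMeasure P
  cont : ∀ ω, ContinuousOn (B ω) (Ici 0)
  zero : ∀ ω, B ω 0 = 0
  meas : ∀ t : ℝ, Measurable fun ω => B ω t
  gauss_incr : ∀ s t : ℝ, 0 ≤ s → s ≤ t →
    Measure.map (fun ω => B ω t - B ω s) P = gaussianReal 0 (Real.toNNReal (t - s))
  indep_incr : ∀ (n : ℕ) (t : Fin (n + 1) → ℝ), Monotone t → 0 ≤ t 0 →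
    iIndepFun
      (fun i : Fin n => fun ω => B ω (t i.succ) - B ω (t i.castSucc)) P

/-- The graph occupation measure `m(x_B / M)` of the scaled process of wells. -/
def scaledWellOcc {Ω : Type*} (B : Ω → ℝ → ℝ) (ω : Ω) (M : ℝ) : Measure (ℝ × ℝ) :=
  graphOccupation (fun h => wellProcess (B ω) h / M)

/-- The graph occupation measure `m(Z_a)` of `Z_a(s) = x_B(s a) / (a² log log a)`. -/
def wellOcc {Ω : Type*} (B : Ω → ℝ → ℝ) (ω : Ω) (a : ℝ) : Measure (ℝ × ℝ) :=
  graphOccupation (fun s => wellProcess (B ω) (s * a) / (a ^ 2 * Real.log (Real.log a)))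

/-! ### Sinai's walk -/

/-- Sinai's random walk in random environment: `p` is the i.i.d. environment with
`E log((1-p₁)/p₁) = 0`, `Var(log((1-p₁)/p₁)) = 1` and finite negative moments
`E[p₁^{-δ}], E[(1-p₁)^{-δ}] < ∞`; `U` is an i.i.d. sequence of uniform `[0,1]` variables
independent of the environment, and `S` is the nearest-neighbor walk on `ℤ` started at `0`
which from site `k` steps to `k+1` with probability `p_k` and to `k-1` with probability
`1 - p_k` (constructed from `U`). -/
structure IsSinaiWalk {Ω : Type*} [MeasurableSpace Ω] (P : Measure Ω)
    (p : Ω → ℤ → ℝ) (U : Ω → ℕ → ℝ) (S : Ω → ℕ → ℤ) : Prop where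
  isProb : IsProbabilityMeasure P
  p_meas : ∀ k : ℤ, Measurable fun ω => p ω k
  U_meas : ∀ n : ℕ, Measurable fun ω => U ω n
  p_mem : ∀ ω k, p ω k ∈ Icc (0 : ℝ) 1
  p_indep : iIndepFun (fun (k : ℤ) (ω : Ω) => p ω k) P
  p_ident : ∀ k : ℤ, Measure.map (fun ω => p ω k) P = Measure.map (fun ω => p ω 0) P
  U_unif : ∀ n : ℕ, Measure.map (fun ω => U ω n) P = volume.restrict (Icc (0 : ℝ) 1)
  U_indep : iIndepFun (fun (n : ℕ) (ω : Ω) => U ω n) P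
  pU_indep : IndepFun (fun ω (k : ℤ) => p ω k) (fun ω (n : ℕ) => U ω n) P
  mean_zero : ∫ ω, Real.log ((1 - p ω 0) / p ω 0) ∂P = 0
  var_one : ∫ ω, (Real.log ((1 - p ω 0) / p ω 0)) ^ 2 ∂P = 1
  neg_moment : ∃ δ : ℝ, 0 < δ ∧
    (∫⁻ ω, (ENNReal.ofReal (p ω 0))⁻¹ ^ δ ∂P) < ∞ ∧
    (∫⁻ ω, (ENNReal.ofReal (1 - p ω 0))⁻¹ ^ δ ∂P) < ∞
  S_zero : ∀ ω, S ω 0 = 0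
  S_step : ∀ ω n, S ω (n + 1) = S ω n + (if U ω n ≤ p ω (S ω n) then 1 else -1)

/-- The graph occupation measure of the rescaled walk `t ↦ S(e^{a t}) / (a² log log a)`. -/
def walkOcc {Ω : Type*} (S : Ω → ℕ → ℤ) (ω : Ω) (a : ℝ) : Measure (ℝ × ℝ) :=
  graphOccupation
    (fun t => (S ω ⌊Real.exp (a * t)⌋₊ : ℝ) / (a ^ 2 * Real.log (Real.log a)))

end

/-! Scaling the vertical coordinate by `c > 0` keeps a measure in `𝓜`, does not change
`s_{μ±}`, and multiplies `f_μ`, `g_μ`, hence `I`, by `c`. Since `c ↦ (vertical scaling of μ)`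
is continuous for the local weak topology, some `c < 1` close to `1` keeps the scaled measure
in `G`, and its rate `c I(μ)` is smaller than `I(μ)` when `0 < I(μ) < ∞`. -/

open scoped Pointwise

def verticalScale (c : ℝ) (p : ℝ × ℝ) : ℝ × ℝ := (p.1, c * p.2)

section VerticalScale

variable {μ : Measure (ℝ × ℝ)} {c : ℝ}

@[simp]
lemma verticalScale_apply (p : ℝ × ℝ) : verticalScale c p = (p.1, c * p.2) := rfl

lemma verticalScale_verticalScale (a b : ℝ) (p : ℝ × ℝ) :
    verticalScale a (verticalScale b p) = verticalScale (a * b) p := by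
  simp [mul_assoc]

lemma verticalScale_one : verticalScale 1 = id := funext fun p => by simp

lemma verticalScale_verticalScale_inv (hc : c ≠ 0) (p : ℝ × ℝ) :
    verticalScale c (verticalScale c⁻¹ p) = p := by
  rw [verticalScale_verticalScale, mul_inv_cancel₀ hc, verticalScale_one, id]

lemma verticalScale_inv_comp_verticalScale (hc : c ≠ 0) :
    verticalScale c⁻¹ ∘ verticalScale c = id := funext fun p => by
  rw [Function.comp_apply, verticalScale_verticalScale, inv_mul_cancel₀ hc, verticalScale_one]

@[fun_prop]
lemma continuous_verticalScale (c : ℝ) : Continuous (verticalScale c) := by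
  unfold verticalScale; fun_prop

@[fun_prop]
lemma measurable_verticalScale (c : ℝ) : Measurable (verticalScale c) :=
  (continuous_verticalScale c).measurable

lemma mem_measSupport_map_verticalScale (hc : c ≠ 0) (p : ℝ × ℝ) :
    p ∈ measSupport (μ.map (verticalScale c)) ↔ verticalScale c⁻¹ p ∈ measSupport μ := by
  constructor
  · intro hp U hU hpU
    have := hp _ (hU.preimage (continuous_verticalScale c⁻¹)) hpU
    rwa [Measure.map_apply (measurable_verticalScale c)
      (hU.preimage (continuous_verticalScale c⁻¹)).measurableSet, ← preimage_comp,
      verticalScale_inv_comp_verticalScale hc, preimage_id] at this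
  · intro hq U hU hpU
    rw [Measure.map_apply (measurable_verticalScale c) hU.measurableSet]
    exact hq _ (hU.preimage (continuous_verticalScale c))
      (by rwa [mem_preimage, verticalScale_verticalScale_inv hc])

lemma sSup_zero_union_pos_inv_mul (hc : 0 < c) (P : ℝ → Prop) :
    sSup ({0} ∪ {y : ℝ | 0 < y ∧ P (c⁻¹ * y)}) = c * sSup ({0} ∪ {y : ℝ | 0 < y ∧ P y}) := by
  have hset : {0} ∪ {y : ℝ | 0 < y ∧ P (c⁻¹ * y)} = c • ({0} ∪ {y : ℝ | 0 < y ∧ P y}) := by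
    ext y
    simp only [mem_smul_set, smul_eq_mul, mem_union, mem_singleton_iff, mem_ofPred_eq]
    constructor
    · rintro (rfl | ⟨hy, hPy⟩)
      · exact ⟨0, Or.inl rfl, mul_zero c⟩
      · exact ⟨c⁻¹ * y, Or.inr ⟨by positivity, hPy⟩, mul_inv_cancel_left₀ hc.ne' y⟩
    · rintro ⟨z, (rfl | ⟨hz, hPz⟩), rfl⟩
      · exact Or.inl (mul_zero c)
      · exact Or.inr ⟨by positivity, by rwa [inv_mul_cancel_left₀ hc.ne']⟩
  rw [hset, Real.sSup_smul_of_nonneg hc.le, smul_eq_mul]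

lemma fOf_map_verticalScale (hc : 0 < c) (t : ℝ) :
    fOf (μ.map (verticalScale c)) t = c * fOf μ t := by
  simp only [fOf, mem_measSupport_map_verticalScale hc.ne', verticalScale_apply]
  exact sSup_zero_union_pos_inv_mul hc fun y => ∃ s, 0 ≤ s ∧ s < t ∧ (s, y) ∈ measSupport μ

lemma gOf_map_verticalScale (hc : 0 < c) (t : ℝ) :
    gOf (μ.map (verticalScale c)) t = c * gOf μ t := by
  simp only [gOf, mem_measSupport_map_verticalScale hc.ne', verticalScale_apply, mul_neg]
  exact sSup_zero_union_pos_inv_mul hc fun y => ∃ s, 0 ≤ s ∧ s < t ∧ (s, -y) ∈ measSupport μ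

lemma map_verticalScale_apply_prod_Ioi (hc : 0 < c) {A : Set ℝ} (hA : MeasurableSet A) :
    μ.map (verticalScale c) (A ×ˢ Ioi 0) = μ (A ×ˢ Ioi 0) := by
  rw [Measure.map_apply (measurable_verticalScale c) (hA.prod measurableSet_Ioi)]
  congr 1
  ext q
  simp [mul_pos_iff_of_pos_left hc]

lemma map_verticalScale_apply_prod_Iio (hc : 0 < c) {A : Set ℝ} (hA : MeasurableSet A) :
    μ.map (verticalScale c) (A ×ˢ Iio 0) = μ (A ×ˢ Iio 0) := by
  rw [Measure.map_apply (measurable_verticalScale c) (hA.prod measurableSet_Iio)]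
  congr 1
  ext q
  simp [mul_neg_iff, hc, hc.not_gt]

lemma sPlus_map_verticalScale (hc : 0 < c) : sPlus (μ.map (verticalScale c)) = sPlus μ := by
  simp only [sPlus, map_verticalScale_apply_prod_Ioi hc measurableSet_Ioo]

lemma sMinus_map_verticalScale (hc : 0 < c) : sMinus (μ.map (verticalScale c)) = sMinus μ := by
  simp only [sMinus, map_verticalScale_apply_prod_Iio hc measurableSet_Ioo]

lemma stieltjesMeasureOf_const_mul (hc : 0 < c) (F : ℝ → ℝ) :
    stieltjesMeasureOf (fun t => c * F t) = ENNReal.ofReal c • stieltjesMeasureOf F := by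
  by_cases hF : Monotone F
  · have hcF : Monotone fun t => c * F t := fun a b hab =>
      mul_le_mul_of_nonneg_left (hF hab) hc.le
    have hlim : ∀ x, hcF.stieltjesFunction x = c * hF.stieltjesFunction x := fun x => by
      rw [hcF.stieltjesFunction_eq, hF.stieltjesFunction_eq]
      exact rightLim_eq_of_tendsto ((hF.tendsto_rightLim x).const_mul c)
    rw [stieltjesMeasureOf, stieltjesMeasureOf, dif_pos hF, dif_pos hcF]
    refine Measure.ext_of_Ioc _ _ fun a b _ => ?_
    rw [Measure.smul_apply, smul_eq_mul, StieltjesFunction.measure_Ioc,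
      StieltjesFunction.measure_Ioc, hlim, hlim, ← mul_sub, ENNReal.ofReal_mul hc.le]
  · have hcF : ¬ Monotone fun t => c * F t := fun h =>
      hF fun a b hab => le_of_mul_le_mul_left (h hab) hc
    rw [stieltjesMeasureOf, stieltjesMeasureOf, dif_neg hF, dif_neg hcF, smul_zero]

lemma Irate_map_verticalScale (hc : 0 < c) :
    Irate (μ.map (verticalScale c)) = ENNReal.ofReal c * Irate μ := by
  have hf : fOf (μ.map (verticalScale c)) = fun t => c * fOf μ t :=
    funext (fOf_map_verticalScale hc)
  have hg : gOf (μ.map (verticalScale c)) = fun t => c * gOf μ t :=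
    funext (gOf_map_verticalScale hc)
  rw [Irate, Irate, sMinus_map_verticalScale hc, sPlus_map_verticalScale hc, hf, hg,
    stieltjesMeasureOf_const_mul hc, stieltjesMeasureOf_const_mul hc, ← smul_add]
  split_ifs <;>
  · simp only [Measure.restrict_smul, lintegral_smul_measure]
    ring

lemma image_verticalScale_closure_graph_subset (c : ℝ) (φ : ℝ → ℝ) :
    verticalScale c '' closure {p : ℝ × ℝ | 0 ≤ p.1 ∧ p.2 = φ p.1} ⊆
      closure {p : ℝ × ℝ | 0 ≤ p.1 ∧ p.2 = c * φ p.1} := by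
  refine (image_closure_subset_closure_image (continuous_verticalScale c)).trans
    (closure_mono ?_)
  rintro _ ⟨p, ⟨hp1, hp2⟩, rfl⟩
  exact ⟨hp1, by simp [hp2]⟩

lemma map_verticalScale_mem_McalSet (hμ : μ ∈ McalSet) (hc : 0 < c) :
    μ.map (verticalScale c) ∈ McalSet := by
  obtain ⟨hmarg, f, g, hf, hg, hf0, hg0, hsupp⟩ := hμ
  refine ⟨?_, fun t => c * f t, fun t => c * g t,
    fun a ha b hb hab => mul_le_mul_of_nonneg_left (hf ha hb hab) hc.le,
    fun a ha b hb hab => mul_le_mul_of_nonneg_left (hg ha hb hab) hc.le,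
    fun t ht => mul_nonneg hc.le (hf0 t ht), fun t ht => mul_nonneg hc.le (hg0 t ht), ?_⟩
  · rwa [Measure.map_map measurable_fst (measurable_verticalScale c)]
  · intro p hp
    rw [← verticalScale_verticalScale_inv hc.ne' p]
    rcases hsupp ((mem_measSupport_map_verticalScale hc.ne' p).1 hp) with hcl | hcl
    · exact Or.inl (image_verticalScale_closure_graph_subset c f (mem_image_of_mem _ hcl))
    · refine Or.inr ?_
      simpa only [mul_neg] using
        image_verticalScale_closure_graph_subset c (fun t => -g t) (mem_image_of_mem _ hcl)

lemma continuous_integral_map_verticalScale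
    (hμ : IsFiniteMeasureOnCompacts (μ.map Prod.fst)) {f : ℝ × ℝ → ℝ} (hf : Continuous f)
    (hfs : HasCompactSupport f) :
    Continuous fun c => ∫ p, f p ∂(μ.map (verticalScale c)) := by
  obtain ⟨C, hC⟩ := hf.bounded_above_of_compact_support hfs
  -- the scaling does not move the first coordinate, so one strip dominates all `c`
  set K := Prod.fst '' tsupport f
  have hK : IsCompact K := hfs.isCompact.image continuous_fst
  have hstrip : μ (Prod.fst ⁻¹' K) < ∞ := by
    rw [← Measure.map_apply measurable_fst hK.measurableSet]
    exact hK.measure_lt_top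
  simp only [integral_map (measurable_verticalScale _).aemeasurable hf.aestronglyMeasurable]
  refine continuous_of_dominated (bound := (Prod.fst ⁻¹' K).indicator fun _ => C)
    (fun c => (hf.comp (continuous_verticalScale c)).aestronglyMeasurable)
    (fun c => ae_of_all _ fun p => ?_)
    ((integrable_indicator_iff (measurable_fst hK.measurableSet)).2
      (integrableOn_const hstrip.ne))
    (ae_of_all _ fun p => by simp only [verticalScale_apply]; fun_prop)
  by_cases hp : f (verticalScale c p) = 0
  · rw [hp, norm_zero]
    exact indicator_nonneg (fun _ _ => (norm_nonneg _).trans (hC 0)) p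
  · rw [indicator_of_mem (show p ∈ Prod.fst ⁻¹' K from ⟨_, subset_tsupport f hp, rfl⟩)]
    exact hC _

lemma continuous_map_verticalScale
    (hμ : IsFiniteMeasureOnCompacts (μ.map Prod.fst)) :
    Continuous fun c : ℝ => μ.map (verticalScale c) := by
  refine continuous_generateFrom_iff.2 ?_
  rintro _ ⟨f, hf, hfs, O, hO, rfl⟩
  exact hO.preimage (continuous_integral_map_verticalScale hμ hf hfs)

end VerticalScale

/-- The minimum of the rate function `I` on an open subset of `𝓜` is either zero,
infinity, or is not achieved: for every open `G ⊆ 𝓜` and `μ ∈ G` with `0 < I(μ) < ∞`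
there exists `ν ∈ G` with `I(ν) < I(μ)`. -/
theorem rate_min_not_achieved :
    ∀ G : Set (Measure (ℝ × ℝ)), IsOpenInM G →
      ∀ μ ∈ G, 0 < Irate μ → Irate μ < ∞ → ∃ ν ∈ G, Irate ν < Irate μ := by
  rintro _ ⟨V, hV, rfl⟩ μ ⟨hμV, hμM⟩ hI0 hItop
  have hfin : IsFiniteMeasureOnCompacts (μ.map Prod.fst) := by
    rw [hμM.1]; infer_instance
  have hnear : ∀ᶠ c in 𝓝[<] 1, μ.map (verticalScale c) ∈ V := by
    refine nhdsWithin_le_nhds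
      ((continuous_map_verticalScale hfin).continuousAt.preimage_mem_nhds ?_)
    rw [verticalScale_one, Measure.map_id]
    exact hV.mem_nhds hμV
  obtain ⟨c, hcV, hc0, hc1⟩ := (hnear.and (Ioo_mem_nhdsLT one_pos)).exists
  refine ⟨μ.map (verticalScale c), ⟨hcV, map_verticalScale_mem_McalSet hμM hc0⟩, ?_⟩
  rw [Irate_map_verticalScale hc0]
  calc ENNReal.ofReal c * Irate μ < 1 * Irate μ :=
        ENNReal.mul_lt_mul_left hI0.ne' hItop.ne (ENNReal.ofReal_lt_one.2 hc1)
    _ = Irate μ := one_mul _
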